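/- Every numerical semigroup generated by a compound sequence is symmetric: if S is generated by G(A,B) for a suitable pair (A,B) with nonempty complement, then for every integer x, exactly one of x and F(S)−x lies in S, where F(S) is the Frobenius number. -/
import Mathlib

open Finset

/-- The compound sequence: `g k A B i = b₁⋯bᵢ · aᵢ₊₁⋯a_k` (0-indexed: `A j = a_{j+1}`,
`B j = b_{j+1}`). -/
def compoundSeq (k : ℕ) (A B : ℕ → ℕ) (i : ℕ) : ℕ :=
  (∏ j ∈ Finset.range i, B j) * (∏ j ∈ Finset.Ico i k, A j)

/-- `n : ℤ` is representable as a nonnegative integer combination of `g₀,…,g_k`. -/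
def RepZ (k : ℕ) (A B : ℕ → ℕ) (n : ℤ) : Prop :=
  ∃ c : Fin (k + 1) → ℕ, n = ∑ i : Fin (k + 1), (c i : ℤ) * (compoundSeq k A B (i : ℕ) : ℤ)

namespace CompoundAux

/-- Representability via a range-indexed sum. -/
def RepR (k : ℕ) (A B : ℕ → ℕ) (n : ℤ) : Prop :=
  ∃ c : ℕ → ℕ, n = ∑ i ∈ Finset.range (k + 1), (c i : ℤ) * (compoundSeq k A B i : ℤ)

lemma repZ_iff_repR (k : ℕ) (A B : ℕ → ℕ) (n : ℤ) : RepZ k A B n ↔ RepR k A B n := by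
  constructor
  · rintro ⟨e, he⟩
    refine ⟨fun i => if h : i < k + 1 then e ⟨i, h⟩ else 0, ?_⟩
    rw [he, ← Fin.sum_univ_eq_sum_range]
    exact Finset.sum_congr rfl fun i _ => by simp [i.isLt]
  · rintro ⟨c, hc⟩
    exact ⟨fun i => c i, by rw [hc, ← Fin.sum_univ_eq_sum_range]⟩

/-- canonical representation -/
def Can (k : ℕ) (A B : ℕ → ℕ) (x : ℤ) (c0 : ℤ) (c : ℕ → ℕ) : Prop :=
  (∀ i, i < k → c i < A i) ∧
  x = c0 * (compoundSeq k A B 0 : ℤ) +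
      ∑ i ∈ Finset.range k, (c i : ℤ) * (compoundSeq k A B (i + 1) : ℤ)

lemma compoundSeq_pos {k : ℕ} {A B : ℕ → ℕ} (hA : ∀ i, i < k → 0 < A i)
    (hB : ∀ i, i < k → 0 < B i) {i : ℕ} (hi : i ≤ k) : 0 < compoundSeq k A B i := by
  unfold compoundSeq
  apply Nat.mul_pos
  · exact Finset.prod_pos fun j hj => hB j (lt_of_lt_of_le (Finset.mem_range.mp hj) hi)
  · exact Finset.prod_pos fun j hj => hA j (Finset.mem_Ico.mp hj).2

lemma compoundSeq_restrict (k : ℕ) (A B : ℕ → ℕ) {i : ℕ} (h : i ≤ k) :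
    compoundSeq (k + 1) A B i = compoundSeq k A B i * A k := by
  unfold compoundSeq
  rw [Finset.prod_Ico_succ_top h]
  ring

lemma compoundSeq_top (k : ℕ) (A B : ℕ → ℕ) :
    compoundSeq k A B k = ∏ j ∈ Finset.range k, B j := by
  unfold compoundSeq
  rw [Finset.Ico_self, Finset.prod_empty, mul_one]

lemma key_rel (k : ℕ) (A B : ℕ → ℕ) :
    A k * compoundSeq (k + 1) A B (k + 1) = B k * compoundSeq (k + 1) A B k := by
  rw [compoundSeq_top, compoundSeq_restrict k A B (le_refl k), compoundSeq_top,
    Finset.prod_range_succ]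
  ring

lemma cop_top (k : ℕ) (A B : ℕ → ℕ)
    (hsuit : ∀ i j, j ≤ i → i < k + 1 → Nat.Coprime (A i) (B j)) :
    Nat.Coprime (compoundSeq (k + 1) A B (k + 1)) (A k) := by
  rw [compoundSeq_top]
  exact Nat.Coprime.prod_left fun j hj =>
    (hsuit k j (Nat.lt_succ_iff.mp (Finset.mem_range.mp hj)) (Nat.lt_succ_self k)).symm

/-- splitting a level-(k+1) canonical sum -/
lemma split_eq (k : ℕ) (A B : ℕ → ℕ) (e0 : ℤ) (e : ℕ → ℕ) :
    e0 * (compoundSeq (k + 1) A B 0 : ℤ) +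
      ∑ i ∈ Finset.range (k + 1), (e i : ℤ) * (compoundSeq (k + 1) A B (i + 1) : ℤ)
    = (A k : ℤ) * (e0 * (compoundSeq k A B 0 : ℤ) +
        ∑ i ∈ Finset.range k, (e i : ℤ) * (compoundSeq k A B (i + 1) : ℤ))
      + (e k : ℤ) * (compoundSeq (k + 1) A B (k + 1) : ℤ) := by
  rw [Finset.sum_range_succ, compoundSeq_restrict k A B (Nat.zero_le k)]
  have h : ∀ i ∈ Finset.range k,
      (e i : ℤ) * (compoundSeq (k + 1) A B (i + 1) : ℤ)
        = (A k : ℤ) * ((e i : ℤ) * (compoundSeq k A B (i + 1) : ℤ)) := by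
    intro i hi
    rw [compoundSeq_restrict k A B (Nat.succ_le_of_lt (Finset.mem_range.mp hi))]
    push_cast; ring
  rw [Finset.sum_congr rfl h, ← Finset.mul_sum]
  push_cast; ring

lemma exists_can : ∀ (k : ℕ) (A B : ℕ → ℕ),
    (∀ i, i < k → 0 < A i) →
    (∀ i j, j ≤ i → i < k → Nat.Coprime (A i) (B j)) →
    ∀ x : ℤ, ∃ c0 c, Can k A B x c0 c := by
  intro k
  induction k with
  | zero =>
    intro A B _ _ x
    exact ⟨x, fun _ => 0, fun i hi => absurd hi (Nat.not_lt_zero i), by simp [compoundSeq]⟩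
  | succ k ih =>
    intro A B hA hsuit x
    have ha : 0 < A k := hA k (Nat.lt_succ_self k)
    haveI : NeZero (A k) := ⟨ha.ne'⟩
    set g : ℕ := compoundSeq (k + 1) A B (k + 1) with hg
    have hu : IsUnit ((g : ZMod (A k))) := (ZMod.isUnit_iff_coprime g (A k)).mpr (cop_top k A B hsuit)
    obtain ⟨v, hv⟩ := isUnit_iff_exists_inv.mp hu
    set t : ZMod (A k) := (x : ZMod (A k)) * v with ht
    set r : ℕ := t.val with hr
    have hrlt : r < A k := ZMod.val_lt t
    have htg : t * (g : ZMod (A k)) = (x : ZMod (A k)) := by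
      rw [ht, mul_assoc, mul_comm v, hv, mul_one]
    have hmod : ((x - (r : ℤ) * (g : ℤ) : ℤ) : ZMod (A k)) = 0 := by
      push_cast
      rw [hr, ZMod.natCast_val, ZMod.cast_id, htg]
      ring
    obtain ⟨y, hy⟩ := (ZMod.intCast_zmod_eq_zero_iff_dvd _ _).mp hmod
    obtain ⟨c0, c, hc1, hc2⟩ := ih A B (fun i hi => hA i (Nat.lt_succ_of_lt hi))
      (fun i j hj hi => hsuit i j hj (Nat.lt_succ_of_lt hi)) y
    refine ⟨c0, fun i => if i = k then r else c i, ?_, ?_⟩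
    · intro i hi
      by_cases hik : i = k
      · simpa [hik] using hrlt
      · have : i < k := by omega
        simpa [hik] using hc1 i this
    · rw [split_eq k A B c0 (fun i => if i = k then r else c i)]
      have hs : ∑ i ∈ Finset.range k,
          ((if i = k then r else c i : ℕ) : ℤ) * (compoundSeq k A B (i + 1) : ℤ)
          = ∑ i ∈ Finset.range k, (c i : ℤ) * (compoundSeq k A B (i + 1) : ℤ) := by
        refine Finset.sum_congr rfl fun i hi => ?_
        rw [if_neg (by have := Finset.mem_range.mp hi; omega)]
      rw [hs, ← hc2, if_pos rfl]
      have : x = (A k : ℤ) * y + (r : ℤ) * (g : ℤ) := by linarith [hy]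
      linarith [this]

lemma can_unique : ∀ (k : ℕ) (A B : ℕ → ℕ),
    (∀ i, i < k → 0 < A i) →
    (∀ i j, j ≤ i → i < k → Nat.Coprime (A i) (B j)) →
    ∀ (x : ℤ) (c0 d0 : ℤ) (c d : ℕ → ℕ),
      Can k A B x c0 c → Can k A B x d0 d → c0 = d0 := by
  intro k
  induction k with
  | zero =>
    intro A B _ _ x c0 d0 c d hc hd
    have h1 := hc.2
    have h2 := hd.2
    simp [compoundSeq] at h1 h2
    omega
  | succ k ih =>
    intro A B hA hsuit x c0 d0 c d hc hd
    have ha : 0 < A k := hA k (Nat.lt_succ_self k)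
    haveI : NeZero (A k) := ⟨ha.ne'⟩
    set g : ℕ := compoundSeq (k + 1) A B (k + 1) with hg
    have hu : IsUnit ((g : ZMod (A k))) := (ZMod.isUnit_iff_coprime g (A k)).mpr (cop_top k A B hsuit)
    have hz : ∀ i, i ≤ k → ((compoundSeq (k + 1) A B i : ℕ) : ZMod (A k)) = 0 := by
      intro i hi
      rw [compoundSeq_restrict k A B hi]
      push_cast
      rw [ZMod.natCast_self, mul_zero]
    have top : ∀ (e0 : ℤ) (e : ℕ → ℕ),
        x = e0 * (compoundSeq (k + 1) A B 0 : ℤ) +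
          ∑ i ∈ Finset.range (k + 1), (e i : ℤ) * (compoundSeq (k + 1) A B (i + 1) : ℤ) →
        (x : ZMod (A k)) = (e k : ZMod (A k)) * (g : ZMod (A k)) := by
      intro e0 e he
      have h := congrArg (fun z : ℤ => (z : ZMod (A k))) he
      simp only [Int.cast_add, Int.cast_mul, Int.cast_natCast, Int.cast_sum] at h
      rw [Finset.sum_range_succ] at h
      rw [hz 0 (Nat.zero_le k)] at h
      have h1 : ∑ i ∈ Finset.range k,
          ((e i : ZMod (A k)) * ((compoundSeq (k + 1) A B (i + 1) : ℕ) : ZMod (A k))) = 0 := by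
        refine Finset.sum_eq_zero fun i hi => ?_
        rw [hz (i + 1) (Nat.succ_le_of_lt (Finset.mem_range.mp hi))]
        ring
      rw [h1] at h
      simpa using h
    have hck : (c k : ZMod (A k)) = (d k : ZMod (A k)) :=
      hu.mul_right_cancel ((top c0 c hc.2).symm.trans (top d0 d hd.2))
    have hckn : c k = d k := by
      rw [← ZMod.val_cast_of_lt (hc.1 k (Nat.lt_succ_self k)), hck,
        ZMod.val_cast_of_lt (hd.1 k (Nat.lt_succ_self k))]
    have hc' := hc.2
    have hd' := hd.2
    rw [split_eq] at hc' hd'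
    rw [hckn] at hc'
    have hane : ((A k : ℤ)) ≠ 0 := by exact_mod_cast ha.ne'
    have heq : c0 * (compoundSeq k A B 0 : ℤ) +
          ∑ i ∈ Finset.range k, (c i : ℤ) * (compoundSeq k A B (i + 1) : ℤ)
        = d0 * (compoundSeq k A B 0 : ℤ) +
          ∑ i ∈ Finset.range k, (d i : ℤ) * (compoundSeq k A B (i + 1) : ℤ) := by
      apply mul_left_cancel₀ hane
      linarith [hc', hd']
    exact ih A B (fun i hi => hA i (Nat.lt_succ_of_lt hi))
      (fun i j hj hi => hsuit i j hj (Nat.lt_succ_of_lt hi)) _ c0 d0 c d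
      ⟨fun i hi => hc.1 i (Nat.lt_succ_of_lt hi), rfl⟩
      ⟨fun i hi => hd.1 i (Nat.lt_succ_of_lt hi), heq⟩

lemma rep_of_can (k : ℕ) (A B : ℕ → ℕ) (x : ℤ) (c0 : ℤ) (c : ℕ → ℕ)
    (h : Can k A B x c0 c) (h0 : 0 ≤ c0) : RepZ k A B x := by
  rw [repZ_iff_repR]
  refine ⟨fun i => if i = 0 then c0.toNat else c (i - 1), ?_⟩
  rw [Finset.sum_range_succ']
  have hs : ∀ i ∈ Finset.range k,
      ((if i + 1 = 0 then c0.toNat else c (i + 1 - 1) : ℕ) : ℤ) * (compoundSeq k A B (i + 1) : ℤ)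
      = (c i : ℤ) * (compoundSeq k A B (i + 1) : ℤ) := by
    intro i _
    norm_num
  rw [Finset.sum_congr rfl hs]
  have h00 : ((if (0:ℕ) = 0 then c0.toNat else c (0 - 1) : ℕ) : ℤ) = c0 := by
    simp [Int.toNat_of_nonneg h0]
  rw [h00]
  linarith [h.2]

lemma can_of_rep : ∀ (k : ℕ) (A B : ℕ → ℕ),
    (∀ i, i < k → 0 < A i) →
    ∀ x : ℤ, RepZ k A B x → ∃ c0 c, 0 ≤ c0 ∧ Can k A B x c0 c := by
  intro k
  induction k with
  | zero =>
    intro A B _ x hx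
    rw [repZ_iff_repR] at hx
    obtain ⟨e, he⟩ := hx
    refine ⟨(e 0 : ℤ), fun _ => 0, Int.natCast_nonneg _,
      fun i hi => absurd hi (Nat.not_lt_zero i), ?_⟩
    simp [compoundSeq] at he ⊢
    omega
  | succ k ih =>
    intro A B hA x hx
    rw [repZ_iff_repR] at hx
    obtain ⟨e, he⟩ := hx
    have ha : 0 < A k := hA k (Nat.lt_succ_self k)
    set q : ℕ := e (k + 1) / A k with hq
    set r : ℕ := e (k + 1) % A k with hrq
    have hrlt : r < A k := Nat.mod_lt _ ha
    set e' : ℕ → ℕ := fun i => if i = k then e k + q * B k else e i with he'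
    set y : ℤ := ∑ i ∈ Finset.range (k + 1), (e' i : ℤ) * (compoundSeq k A B i : ℤ) with hyd
    have hrep : RepR k A B y := ⟨e', rfl⟩
    obtain ⟨c0, c, hc0, hcan⟩ := ih A B (fun i hi => hA i (Nat.lt_succ_of_lt hi)) y
      ((repZ_iff_repR k A B y).mpr hrep)
    have hkey : (A k : ℤ) * (compoundSeq (k + 1) A B (k + 1) : ℤ)
        = (B k : ℤ) * (compoundSeq (k + 1) A B k : ℤ) := by
      exact_mod_cast congrArg (Nat.cast : ℕ → ℤ) (key_rel k A B)
    have h1 : (A k : ℤ) * y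
        = ∑ i ∈ Finset.range (k + 1), (e' i : ℤ) * (compoundSeq (k + 1) A B i : ℤ) := by
      rw [hyd, Finset.mul_sum]
      refine Finset.sum_congr rfl fun i hi => ?_
      rw [compoundSeq_restrict k A B (Nat.lt_succ_iff.mp (Finset.mem_range.mp hi))]
      push_cast; ring
    have h2 : ∑ i ∈ Finset.range (k + 1), (e' i : ℤ) * (compoundSeq (k + 1) A B i : ℤ)
        = (∑ i ∈ Finset.range (k + 1), (e i : ℤ) * (compoundSeq (k + 1) A B i : ℤ))
          + (q : ℤ) * ((B k : ℤ) * (compoundSeq (k + 1) A B k : ℤ)) := by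
      rw [Finset.sum_range_succ, Finset.sum_range_succ]
      have h2a : ∑ i ∈ Finset.range k, (e' i : ℤ) * (compoundSeq (k + 1) A B i : ℤ)
          = ∑ i ∈ Finset.range k, (e i : ℤ) * (compoundSeq (k + 1) A B i : ℤ) := by
        refine Finset.sum_congr rfl fun i hi => ?_
        have hik : i ≠ k := by have := Finset.mem_range.mp hi; omega
        have hei : e' i = e i := by simp [he', hik]
        rw [hei]
      have hek : e' k = e k + q * B k := by simp [he']
      rw [h2a, hek]
      push_cast; ring
    have hdm : (A k : ℤ) * (q : ℤ) + (r : ℤ) = (e (k + 1) : ℤ) := by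
      exact_mod_cast congrArg (Nat.cast : ℕ → ℤ) (Nat.div_add_mod (e (k + 1)) (A k))
    have hx2 : x = (A k : ℤ) * y + (r : ℤ) * (compoundSeq (k + 1) A B (k + 1) : ℤ) := by
      rw [h1, h2]
      rw [Finset.sum_range_succ] at he
      rw [he, ← hkey]
      linear_combination (compoundSeq (k + 1) A B (k + 1) : ℤ) * hdm.symm
    refine ⟨c0, fun i => if i = k then r else c i, hc0, ?_, ?_⟩
    · intro i hi
      by_cases hik : i = k
      · simpa [hik] using hrlt
      · have : i < k := by omega
        simpa [hik] using hcan.1 i this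
    · rw [split_eq k A B c0 (fun i => if i = k then r else c i)]
      have hs : ∑ i ∈ Finset.range k,
          ((if i = k then r else c i : ℕ) : ℤ) * (compoundSeq k A B (i + 1) : ℤ)
          = ∑ i ∈ Finset.range k, (c i : ℤ) * (compoundSeq k A B (i + 1) : ℤ) := by
        refine Finset.sum_congr rfl fun i hi => ?_
        rw [if_neg (by have := Finset.mem_range.mp hi; omega)]
      rw [hs, ← hcan.2, if_pos rfl]
      exact hx2

end CompoundAux

open CompoundAux in
/-- Every numerical semigroup generated by a compound sequence is symmetric: for every
integer `x`, exactly one of `x` and `F − x` is representable, where `F` is the Frobenius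
number. -/
theorem compound_symmetric (k : ℕ) (A B : ℕ → ℕ)
    (hA : ∀ i, i < k → 0 < A i) (hB : ∀ i, i < k → 0 < B i)
    (hsuit : ∀ i j, j ≤ i → i < k → Nat.Coprime (A i) (B j))
    (hne : ∃ n : ℕ, 0 < n ∧ ¬ RepZ k A B n)
    (F : ℤ) (hF1 : ¬ RepZ k A B F) (hF2 : ∀ m : ℤ, F < m → RepZ k A B m) :
    ∀ x : ℤ, RepZ k A B x ↔ ¬ RepZ k A B (F - x) := by
  have rep_iff : ∀ (x c0 : ℤ) (c : ℕ → ℕ), Can k A B x c0 c → (RepZ k A B x ↔ 0 ≤ c0) := by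
    intro x c0 c h
    constructor
    · intro hr
      obtain ⟨d0, d, hd0, hd⟩ := can_of_rep k A B hA x hr
      rw [can_unique k A B hA hsuit x c0 d0 c d h hd]
      exact hd0
    · exact rep_of_can k A B x c0 c h
  set F0 : ℤ := (∑ i ∈ Finset.range k, ((A i : ℤ) - 1) * (compoundSeq k A B (i + 1) : ℤ))
    - (compoundSeq k A B 0 : ℤ) with hF0def
  have hcanF0 : Can k A B F0 (-1) (fun i => A i - 1) := by
    constructor
    · intro i hi
      have := hA i hi
      show A i - 1 < A i
      omega
    · have hterm : ∀ i ∈ Finset.range k,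
          ((A i - 1 : ℕ) : ℤ) * (compoundSeq k A B (i + 1) : ℤ)
          = ((A i : ℤ) - 1) * (compoundSeq k A B (i + 1) : ℤ) := by
        intro i hi
        have h1 := hA i (Finset.mem_range.mp hi)
        rw [Nat.cast_sub h1]
        norm_num
      rw [Finset.sum_congr rfl hterm, hF0def]
      ring
  have hg0 : (0 : ℤ) < (compoundSeq k A B 0 : ℤ) := by
    exact_mod_cast compoundSeq_pos hA hB (Nat.zero_le k)
  have hnF0 : ¬ RepZ k A B F0 := by
    rw [rep_iff F0 (-1) _ hcanF0]
    norm_num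
  have hbig : ∀ m : ℤ, F0 < m → RepZ k A B m := by
    intro m hm
    obtain ⟨c0, c, hcan⟩ := exists_can k A B hA hsuit m
    have hle : ∑ i ∈ Finset.range k, (c i : ℤ) * (compoundSeq k A B (i + 1) : ℤ)
        ≤ ∑ i ∈ Finset.range k, ((A i : ℤ) - 1) * (compoundSeq k A B (i + 1) : ℤ) := by
      refine Finset.sum_le_sum fun i hi => ?_
      have h1 : (c i : ℤ) < (A i : ℤ) := by exact_mod_cast hcan.1 i (Finset.mem_range.mp hi)
      exact mul_le_mul_of_nonneg_right (by linarith) (Int.natCast_nonneg _)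
    have h2 : (-1 : ℤ) * (compoundSeq k A B 0 : ℤ) < c0 * (compoundSeq k A B 0 : ℤ) := by
      have := hcan.2
      rw [hF0def] at hm
      linarith
    have h3 : (-1 : ℤ) < c0 := lt_of_mul_lt_mul_right (by linarith [h2]) (le_of_lt hg0)
    exact rep_of_can k A B m c0 c hcan (by linarith)
  have hFF0 : F = F0 := by
    rcases lt_trichotomy F F0 with h | h | h
    · exact absurd (hF2 F0 h) hnF0
    · exact h
    · exact absurd (hbig F h) hF1
  intro x
  obtain ⟨c0, c, hcan⟩ := exists_can k A B hA hsuit x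
  have hcan2 : Can k A B (F - x) (-1 - c0) (fun i => A i - 1 - c i) := by
    constructor
    · intro i hi
      have h1 := hA i hi
      have h2 := hcan.1 i hi
      show A i - 1 - c i < A i
      omega
    · have hterm : ∀ i ∈ Finset.range k,
          ((A i - 1 - c i : ℕ) : ℤ) * (compoundSeq k A B (i + 1) : ℤ)
          = (((A i : ℤ) - 1) - (c i : ℤ)) * (compoundSeq k A B (i + 1) : ℤ) := by
        intro i hi
        have h1 := hA i (Finset.mem_range.mp hi)
        have h2 := hcan.1 i (Finset.mem_range.mp hi)
        have : ((A i - 1 - c i : ℕ) : ℤ) = ((A i : ℤ) - 1) - (c i : ℤ) := by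
          rw [Nat.cast_sub (by omega), Nat.cast_sub h1]
          norm_num
        rw [this]
      rw [Finset.sum_congr rfl hterm]
      have hsplit : ∑ i ∈ Finset.range k,
          (((A i : ℤ) - 1) - (c i : ℤ)) * (compoundSeq k A B (i + 1) : ℤ)
          = ∑ i ∈ Finset.range k, ((A i : ℤ) - 1) * (compoundSeq k A B (i + 1) : ℤ)
            - ∑ i ∈ Finset.range k, (c i : ℤ) * (compoundSeq k A B (i + 1) : ℤ) := by
        rw [← Finset.sum_sub_distrib]
        exact Finset.sum_congr rfl fun i _ => by ring
      rw [hsplit, hFF0, hF0def]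
      linarith [hcan.2]
  rw [rep_iff x c0 c hcan, rep_iff (F - x) (-1 - c0) _ hcan2]
  omega
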